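/- Let X be a real Hilbert space with unit sphere S_X, let C be a subset of X, and let N : C → S_X be a mapping. Then the following are equivalent: (1) there exists a convex body V of class C^{1,1} whose outer unit normal map N_{∂V} is Lipschitz, with C ⊆ ∂V and N_{∂V}(x) = N(x) for every x ∈ C; (2) there exists M > 0 such that for every pair of points x₁, x₂ ∈ C there exists a convex body V(x₁,x₂) of class C^{1,1} whose outer unit normal map is M-Lipschitz, with x₁, x₂ ∈ ∂V(x₁,x₂) and such that N(x₁) and N(x₂) are outwardly normal to ∂V(x₁,x₂) at x₁ and x₂ respectively. (This is the finiteness principle for prescribing tangent hyperplanes: a hyperplane H through x_H with unit normal N(x_H) is tangent to the C^{1,1} hypersurface ∂V at x_H exactly when x_H ∈ ∂V and N(x_H) is outwardly normal there.) -/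
import Mathlib


open scoped RealInnerProductSpace
open Metric Set

variable {X : Type*} [NormedAddCommGroup X] [InnerProductSpace ℝ X]

/-- A convex body: a closed convex set with nonempty interior. -/
def IsConvexBody (V : Set X) : Prop :=
  IsClosed V ∧ Convex ℝ V ∧ (interior V).Nonempty

/-- `u` is an outward unit normal to `∂V` at `x`. -/
def IsOutwardNormal (V : Set X) (x u : X) : Prop :=
  ‖u‖ = 1 ∧ ∀ y ∈ V, ⟪u, y - x⟫ ≤ 0

/-- `V` is a convex body of class `C^{1,1}` whose outer unit normal (Gauss) map is `NS`,
with `NS` being `L`-Lipschitz on the boundary (equivalently, the principal curvatures of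
`∂V` are bounded by `L`). -/
def IsC11BodyWith (V : Set X) (NS : X → X) (L : ℝ) : Prop :=
  IsConvexBody V ∧
  (∀ x ∈ frontier V, IsOutwardNormal V x (NS x) ∧ ∀ u, IsOutwardNormal V x u → u = NS x) ∧
  (∀ x ∈ frontier V, ∀ y ∈ frontier V, ‖NS x - NS y‖ ≤ L * ‖x - y‖)

lemma le_infDist' {s : Set X} {x : X} {r : ℝ} (hs : s.Nonempty)
    (h : ∀ y ∈ s, r ≤ dist x y) : r ≤ infDist x s := by
  rw [infDist_eq_iInf]
  haveI := hs.to_subtype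
  exact le_ciInf fun y => h y y.2

lemma exists_proj [CompleteSpace X] {K : Set X} (hK : Convex ℝ K) (hcl : IsClosed K)
    (hne : K.Nonempty) (z : X) :
    ∃ p ∈ K, ‖z - p‖ = infDist z K ∧ ∀ k ∈ K, ⟪z - p, k - p⟫ ≤ 0 := by
  obtain ⟨p, hp, hmin⟩ := exists_norm_eq_iInf_of_complete_convex hne hcl.isComplete hK z
  refine ⟨p, hp, ?_, (norm_eq_iInf_iff_real_inner_le_zero hK hp).1 hmin⟩
  rw [hmin, infDist_eq_iInf]
  haveI := hne.to_subtype
  exact le_antisymm (le_ciInf fun w => by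
      rw [dist_eq_norm]
      exact ciInf_le ⟨0, Set.forall_mem_range.2 fun _ => norm_nonneg _⟩ w)
    (le_ciInf fun w => by
      rw [← dist_eq_norm z w]
      exact ciInf_le ⟨0, Set.forall_mem_range.2 fun _ => dist_nonneg⟩ w)

lemma norm_add3_sq (a b c : X) : ‖a + b + c‖^2 =
    ‖a‖^2 + ‖b‖^2 + ‖c‖^2 + 2*⟪a,b⟫ + 2*⟪a,c⟫ + 2*⟪b,c⟫ := by
  rw [norm_add_sq_real, norm_add_sq_real, inner_add_left]
  ring

/-- Expansion of the squared norm used in the interior-ball argument. -/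
lemma expand_sq {p y w u : X} (e ρ : ℝ) (hw : ‖w‖ = 1) (hu : ‖u‖ = 1) :
    ‖(p - y) + e • w + ρ • u‖^2 = ‖p - y‖^2 + e^2 + ρ^2
      + 2*(e*⟪w, p - y⟫) + 2*(ρ*⟪u, p - y⟫) + 2*(e*ρ*⟪w, u⟫) := by
  rw [norm_add3_sq]
  rw [norm_smul, norm_smul, real_inner_smul_right, real_inner_smul_right,
    real_inner_smul_left, real_inner_smul_right]
  simp only [Real.norm_eq_abs, mul_pow, sq_abs, hw, hu]
  rw [real_inner_comm (p - y) w, real_inner_comm (p - y) u]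
  ring

/-- If `ζ ∉ W`, the metric projection `p` of `ζ` to `W` lies on the frontier,
and `ζ = p + e • NS p` where `e = infDist ζ W > 0`. -/
lemma exists_foot [CompleteSpace X] {W : Set X} {NS : X → X} {M : ℝ}
    (h : IsC11BodyWith W NS M) {ζ : X} (hζ : ζ ∉ W) :
    ∃ p ∈ frontier W, 0 < infDist ζ W ∧ ζ = p + (infDist ζ W) • NS p := by
  obtain ⟨hcl, hconv, hint⟩ := h.1
  have hne : W.Nonempty := hint.mono interior_subset
  obtain ⟨p, hpW, hdist, hvar⟩ := exists_proj hconv hcl hne ζ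
  set e := infDist ζ W with he_def
  have he : 0 < e := by
    rcases lt_or_eq_of_le (infDist_nonneg (s := W) (x := ζ)) with h' | h'
    · exact h'
    · exfalso
      apply hζ
      have : ‖ζ - p‖ = 0 := by rw [hdist, he_def, ← h']
      have : ζ = p := by rwa [norm_eq_zero, sub_eq_zero] at this
      rwa [this]
  have hray : ∀ σ : ℝ, 0 < σ → σ ≤ 1 → p + σ • (ζ - p) ∉ W := by
    intro σ hσ hσ1 hmem
    have := hvar _ hmem
    rw [add_sub_cancel_left, real_inner_smul_right, real_inner_self_eq_norm_sq] at this
    have hgt : 0 < ‖ζ - p‖ := by rw [hdist]; exact he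
    nlinarith [mul_pos hσ (pow_pos hgt 2)]
  have hfront : p ∈ frontier W := by
    rw [frontier_eq_closure_inter_closure]
    refine ⟨subset_closure hpW, ?_⟩
    rw [Metric.mem_closure_iff]
    intro ε hε
    have hen : 0 < ‖ζ - p‖ := by rw [hdist]; exact he
    refine ⟨p + (min 1 (ε / (2 * ‖ζ - p‖))) • (ζ - p), hray _ ?_ (min_le_left _ _), ?_⟩
    · exact lt_min one_pos (div_pos hε (by positivity))
    · rw [dist_eq_norm]
      have : p - (p + (min 1 (ε / (2 * ‖ζ - p‖))) • (ζ - p))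
          = -((min 1 (ε / (2 * ‖ζ - p‖))) • (ζ - p)) := by abel
      rw [this, norm_neg, norm_smul, Real.norm_eq_abs,
        abs_of_pos (lt_min one_pos (div_pos hε (by positivity)))]
      calc (min 1 (ε / (2 * ‖ζ - p‖))) * ‖ζ - p‖
          ≤ (ε / (2 * ‖ζ - p‖)) * ‖ζ - p‖ := by
            exact mul_le_mul_of_nonneg_right (min_le_right _ _) (norm_nonneg _)
        _ = ε / 2 := by field_simp
        _ < ε := by linarith
  have hnormal : IsOutwardNormal W p ((e⁻¹) • (ζ - p)) := by
    constructor
    · rw [norm_smul, Real.norm_eq_abs, abs_of_pos (inv_pos.2 he), ← hdist,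
        inv_mul_cancel₀ (by rw [hdist]; exact ne_of_gt he)]
    · intro k hk
      rw [real_inner_smul_left]
      exact mul_nonpos_of_nonneg_of_nonpos (inv_pos.2 he).le (hvar k hk)
  have huniq := (h.2.1 p hfront).2 _ hnormal
  refine ⟨p, hfront, he, ?_⟩
  have : e • (e⁻¹ • (ζ - p)) = ζ - p := by
    rw [smul_smul, mul_inv_cancel₀ (ne_of_gt he), one_smul]
  rw [huniq] at this
  rw [this]; abel

lemma step_ineq {r t ε e x δ β A : ℝ}
    (hr : 0 < r) (ht : 0 < t) (hε : 0 < ε) (hεt : ε ≤ t)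
    (hε2 : ε * (2*r - t) ≤ (r - t)^2) (htr : t + ε ≤ r)
    (he : 0 < e) (hx : 0 ≤ x) (hδ0 : 0 ≤ δ) (hδ2 : δ ≤ 2)
    (hlip : r * δ ≤ x) (hβ : t * δ^2 / 2 ≤ β) (hA : β - δ * x ≤ A)
    (hviol : x^2 + e^2 + 2*e*β + 2*(t+ε)*A + 2*e*(t+ε)*(1 - δ^2/2) < 0) : False := by
  have h4 : 0 ≤ 4 - δ^2 := by nlinarith
  have h1 : (0:ℝ) ≤ x + r*δ - 2*(t+ε)*δ := by nlinarith [mul_nonneg (sub_nonneg.2 htr) hδ0]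
  have h2 : (0:ℝ) ≤ (r-t)^2 - ε*(2*r-t) := by linarith
  have h3 : (0:ℝ) ≤ e + (2*t - 2*ε) + ε*(4 - δ^2) := by
    nlinarith [mul_nonneg hε.le h4]
  nlinarith [mul_nonneg (sub_nonneg.2 hlip) h1,
    mul_nonneg (sq_nonneg δ) h2,
    mul_nonneg he.le h3]

lemma base_ineq {ε₀ e x δ β A : ℝ}
    (hε₀ : 0 < ε₀) (he : 0 < e) (he2 : e ≤ 2*ε₀) (hx : 0 ≤ x) (hδ0 : 0 ≤ δ)
    (hlip : 4*ε₀ * δ ≤ x) (hβ : 0 ≤ β) (hA : β - δ * x ≤ A)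
    (hviol : x^2 + e^2 + 2*e*β + 2*ε₀*A + 2*e*ε₀*(1 - δ^2/2) < 0) : False := by
  nlinarith [mul_nonneg (sub_nonneg.2 hlip) hx, mul_nonneg (sub_nonneg.2 hlip) hδ0,
    mul_nonneg he.le hβ, mul_nonneg hε₀.le hβ, sq_nonneg (x - 4*ε₀*δ),
    mul_nonneg (mul_nonneg he.le hε₀.le) (sq_nonneg δ),
    mul_nonneg (sub_nonneg.2 he2) (mul_nonneg hε₀.le (sq_nonneg δ)), mul_pos he hε₀]

/-- `GoodT W NS t` : every open ball of radius `t` tangent from inside at a boundary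
point is contained in `W`. -/
def GoodT (W : Set X) (NS : X → X) (t : ℝ) : Prop :=
  ∀ y ∈ frontier W, ∀ ζ : X, ‖ζ - (y - t • NS y)‖ < t → ζ ∈ W

lemma goodT_closed {W : Set X} {NS : X → X} {M : ℝ} (h : IsC11BodyWith W NS M)
    {t : ℝ} (ht : 0 < t) (hg : GoodT W NS t) :
    ∀ y ∈ frontier W, ∀ ζ : X, ‖ζ - (y - t • NS y)‖ ≤ t → ζ ∈ W := by
  intro y hy ζ hζ
  have hball : ball (y - t • NS y) t ⊆ W := fun z hz =>
    hg y hy z (by rw [mem_ball, dist_eq_norm] at hz; exact hz)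
  have hmem : ζ ∈ closedBall (y - t • NS y) t := by rwa [mem_closedBall, dist_eq_norm]
  rw [← closure_ball _ (ne_of_gt ht)] at hmem
  exact closure_minimal hball h.1.1 hmem

/-- Setup of scalar data at a "foot point" for the interior-ball induction. -/
lemma foot_scalars [CompleteSpace X] {W : Set X} {NS : X → X} {M : ℝ}
    (h : IsC11BodyWith W NS M) (hM : 0 < M)
    {y : X} (hy : y ∈ frontier W) {ζ : X} (hζ : ζ ∉ W) {ρ : ℝ} (hρ : 0 < ρ)
    (hball : ‖ζ - (y - ρ • NS y)‖ < ρ) :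
    ∃ p ∈ frontier W, 0 < infDist ζ W ∧
      (‖p - y‖^2 + (infDist ζ W)^2 + 2*(infDist ζ W)*⟪NS p, p - y⟫ + 2*ρ*⟪NS y, p - y⟫
        + 2*(infDist ζ W)*ρ*(1 - ‖NS y - NS p‖^2/2) < 0) ∧
      ⟪NS p, p - y⟫ - ‖NS y - NS p‖ * ‖p - y‖ ≤ ⟪NS y, p - y⟫ ∧
      ‖NS y - NS p‖ ≤ M * ‖p - y‖ ∧ 0 ≤ ⟪NS p, p - y⟫ ∧
      infDist ζ W ≤ ‖ζ - (y - ρ • NS y)‖ + ρ := by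
  obtain ⟨p, hp, he, hfoot⟩ := exists_foot h hζ
  set e := infDist ζ W
  set u := NS y
  set w := NS p
  have hu : ‖u‖ = 1 := (h.2.1 y hy).1.1
  have hw : ‖w‖ = 1 := (h.2.1 p hp).1.1
  have hWy : y ∈ W := by
    have : frontier W ⊆ W := by
      rw [frontier_eq_closure_inter_closure]
      exact fun z hz => h.1.1.closure_subset hz.1
    exact this hy
  have hζc : ζ - (y - ρ • u) = (p - y) + e • w + ρ • u := by
    rw [hfoot]; abel
  have hexp : ‖ζ - (y - ρ • u)‖^2 = ‖p - y‖^2 + e^2 + ρ^2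
      + 2*(e*⟪w, p - y⟫) + 2*(ρ*⟪u, p - y⟫) + 2*(e*ρ*⟪w, u⟫) := by
    rw [hζc]; exact expand_sq e ρ hw hu
  have hs : ⟪w, u⟫ = 1 - ‖u - w‖^2/2 := by
    have := norm_sub_sq_real u w
    rw [hu, hw] at this
    rw [real_inner_comm]
    nlinarith [this]
  have hviol : ‖p - y‖^2 + e^2 + 2*e*⟪w, p - y⟫ + 2*ρ*⟪u, p - y⟫
      + 2*e*ρ*(1 - ‖u - w‖^2/2) < 0 := by
    have hlt : ‖ζ - (y - ρ • u)‖^2 < ρ^2 :=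
      pow_lt_pow_left₀ hball (norm_nonneg _) (by norm_num)
    rw [hexp, hs] at hlt
    nlinarith [hlt]
  refine ⟨p, hp, he, by nlinarith [hviol], ?_, ?_, ?_, ?_⟩
  · have := abs_real_inner_le_norm (u - w) (p - y)
    have h2 : ⟪u - w, p - y⟫ = ⟪u, p - y⟫ - ⟪w, p - y⟫ := inner_sub_left u w (p - y)
    have := neg_abs_le ⟪u - w, p - y⟫
    nlinarith [abs_real_inner_le_norm (u - w) (p - y), neg_abs_le ⟪u - w, p - y⟫]
  · have := h.2.2 y hy p hp
    rwa [norm_sub_rev y p] at this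
  · have := (h.2.1 p hp).1.2 y hWy
    have h2 : ⟪w, p - y⟫ = -⟪w, y - p⟫ := by
      rw [← inner_neg_right]; congr 1; abel
    rw [h2]; linarith
  · calc e ≤ dist ζ y := infDist_le_dist_of_mem hWy
        _ ≤ dist ζ (y - ρ • u) + dist (y - ρ • u) y := dist_triangle _ _ _
        _ ≤ ‖ζ - (y - ρ • u)‖ + ρ := by
          rw [dist_eq_norm, dist_eq_norm]
          have : y - ρ • u - y = -(ρ • u) := by abel
          rw [this, norm_neg, norm_smul, Real.norm_eq_abs, abs_of_pos hρ, hu, mul_one]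

lemma goodT_base [CompleteSpace X] {W : Set X} {NS : X → X} {M : ℝ}
    (h : IsC11BodyWith W NS M) (hM : 0 < M) : GoodT W NS (1/(4*M)) := by
  intro y hy ζ hball
  by_contra hζ
  set ε₀ := 1/(4*M) with hε₀def
  have hε₀ : 0 < ε₀ := by positivity
  obtain ⟨p, hp, he, hviol, hA, hlip, hβ, hebd⟩ := foot_scalars h hM hy hζ hε₀ hball
  have he2 : infDist ζ W ≤ 2*ε₀ := by
    have := hebd; linarith [hball]
  have hlip' : 4*ε₀ * ‖NS y - NS p‖ ≤ ‖p - y‖ := by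
    have h4 : 4*ε₀ = 1/M := by rw [hε₀def]; field_simp
    rw [h4, one_div, inv_mul_le_iff₀ hM]
    exact hlip
  exact base_ineq hε₀ he he2 (norm_nonneg _) (norm_nonneg _) hlip' hβ hA hviol

lemma goodT_step [CompleteSpace X] {W : Set X} {NS : X → X} {M : ℝ}
    (h : IsC11BodyWith W NS M) (hM : 0 < M) {t ε : ℝ}
    (ht : 0 < t) (hε : 0 < ε) (hεt : ε ≤ t)
    (hε2 : ε * (2*(1/M) - t) ≤ ((1/M) - t)^2) (htr : t + ε ≤ 1/M)
    (hg : GoodT W NS t) : GoodT W NS (t + ε) := by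
  intro y hy ζ hball
  by_contra hζ
  have hρ : 0 < t + ε := by linarith
  obtain ⟨p, hp, he, hviol, hA, hlip, hβ0, hebd⟩ := foot_scalars h hM hy hζ hρ hball
  -- upgrade hβ0 using the closed tangent balls of radius t
  have hu : ‖NS y‖ = 1 := (h.2.1 y hy).1.1
  have hw : ‖NS p‖ = 1 := (h.2.1 p hp).1.1
  have hβ : t * ‖NS y - NS p‖^2 / 2 ≤ ⟪NS p, p - y⟫ := by
    have hmem : y - t • NS y + t • NS p ∈ W := by
      refine goodT_closed h ht hg y hy _ ?_
      have : y - t • NS y + t • NS p - (y - t • NS y) = t • NS p := by abel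
      rw [this, norm_smul, Real.norm_eq_abs, abs_of_pos ht, hw, mul_one]
    have hn := (h.2.1 p hp).1.2 _ hmem
    have hexp : ⟪NS p, y - t • NS y + t • NS p - p⟫
        = ⟪NS p, y - p⟫ - t * ⟪NS p, NS y⟫ + t * ⟪NS p, NS p⟫ := by
      have : y - t • NS y + t • NS p - p = (y - p) - t • NS y + t • NS p := by abel
      rw [this, inner_add_right, inner_sub_right, real_inner_smul_right,
        real_inner_smul_right]
    rw [hexp, real_inner_self_eq_norm_sq, hw] at hn
    have hs : ⟪NS p, NS y⟫ = 1 - ‖NS y - NS p‖^2/2 := by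
      have := norm_sub_sq_real (NS y) (NS p)
      rw [hu, hw] at this
      rw [real_inner_comm]
      nlinarith [this]
    have hyp : ⟪NS p, y - p⟫ = -⟪NS p, p - y⟫ := by
      rw [← inner_neg_right]; congr 1; abel
    rw [hs, hyp] at hn
    nlinarith [hn]
  have hlip' : (1/M) * ‖NS y - NS p‖ ≤ ‖p - y‖ := by
    rw [one_div, inv_mul_le_iff₀ hM]; exact hlip
  have hδ2 : ‖NS y - NS p‖ ≤ 2 := by
    calc ‖NS y - NS p‖ ≤ ‖NS y‖ + ‖NS p‖ := norm_sub_le _ _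
      _ = 2 := by rw [hu, hw]; norm_num
  exact step_ineq (by positivity) ht hε hεt hε2 htr he (norm_nonneg _) (norm_nonneg _)
    hδ2 hlip' hβ hA hviol

lemma goodT_all [CompleteSpace X] {W : Set X} {NS : X → X} {M : ℝ}
    (h : IsC11BodyWith W NS M) (hM : 0 < M) : GoodT W NS (1/M) := by
  set r := 1/M with hrdef
  have hr : 0 < r := by positivity
  set S : Set ℝ := {t | t ∈ Set.Icc (1/(4*M)) r ∧ GoodT W NS t} with hSdef
  have hbase : (1/(4*M)) ∈ S := by
    refine ⟨⟨le_refl _, ?_⟩, goodT_base h hM⟩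
    rw [hrdef]
    rw [div_le_div_iff₀ (by positivity) hM]
    nlinarith
  have hbdd : BddAbove S := ⟨r, fun t ht => ht.1.2⟩
  set g := sSup S with hgdef
  have hg1 : 1/(4*M) ≤ g := le_csSup hbdd hbase
  have hg2 : g ≤ r := csSup_le ⟨_, hbase⟩ fun t ht => ht.1.2
  have hgpos : 0 < g := lt_of_lt_of_le (by positivity) hg1
  have hgood : GoodT W NS g := by
    intro y hy ζ hζ
    have hu : ‖NS y‖ = 1 := (h.2.1 y hy).1.1
    set η := g - ‖ζ - (y - g • NS y)‖ with hηdef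
    have hη : 0 < η := by rw [hηdef]; linarith
    obtain ⟨t, htS, htlt⟩ := exists_lt_of_lt_csSup ⟨_, hbase⟩ (show g - η/2 < g by linarith)
    have htg : t ≤ g := le_csSup hbdd htS
    refine htS.2 y hy ζ ?_
    have hdiff : (y - g • NS y) - (y - t • NS y) = (t - g) • NS y := by
      rw [sub_smul]; abel
    calc ‖ζ - (y - t • NS y)‖
        ≤ ‖ζ - (y - g • NS y)‖ + ‖(y - g • NS y) - (y - t • NS y)‖ := by
          have : ζ - (y - t • NS y) = (ζ - (y - g • NS y)) + ((y - g • NS y) - (y - t • NS y)) := by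
            abel
          rw [this]; exact norm_add_le _ _
      _ = (g - η) + (g - t) := by
          rw [hdiff, norm_smul, Real.norm_eq_abs, abs_of_nonpos (by linarith), hu]
          rw [hηdef]; ring
      _ < t := by linarith
  by_cases hgr : g = r
  · rwa [hgr] at hgood
  have hglt : g < r := lt_of_le_of_ne hg2 hgr
  exfalso
  set ε := min (min ((r - g)^2/(2*r - g)) g) (r - g) with hεdef
  have h2rg : 0 < 2*r - g := by linarith
  have hε : 0 < ε := by
    refine lt_min (lt_min ?_ hgpos) (by linarith)
    exact div_pos (pow_pos (by linarith) 2) h2rg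
  have hεg : ε ≤ g := le_trans (min_le_left _ _) (min_le_right _ _)
  have hεr : g + ε ≤ r := by
    have := min_le_right (min ((r - g)^2/(2*r - g)) g) (r - g)
    linarith
  have hε2 : ε * (2*r - g) ≤ (r - g)^2 := by
    have h1 : ε ≤ (r - g)^2/(2*r - g) := le_trans (min_le_left _ _) (min_le_left _ _)
    rw [← le_div_iff₀ h2rg]
    exact h1
  have hstep : GoodT W NS (g + ε) := goodT_step h hM hgpos hε hεg hε2 hεr hgood
  have : g + ε ∈ S := ⟨⟨by linarith, hεr⟩, hstep⟩
  have := le_csSup hbdd this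
  linarith

/-- Interior ball condition: a convex body with `M`-Lipschitz Gauss map contains the
closed ball of radius `1/M` tangent from inside at any boundary point. -/
lemma interior_ball [CompleteSpace X] {W : Set X} {NS : X → X} {M : ℝ}
    (h : IsC11BodyWith W NS M) (hM : 0 < M) :
    ∀ y ∈ frontier W, ∀ ζ : X, ‖ζ - (y - (1/M) • NS y)‖ ≤ 1/M → ζ ∈ W :=
  goodT_closed h (by positivity) (goodT_all h hM)

/-- The key two-point inequality extracted from a pairwise `C^{1,1}` body. -/
lemma key_ineq [CompleteSpace X] {W : Set X} {NSW : X → X} {M : ℝ}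
    (h : IsC11BodyWith W NSW M) (hM : 0 < M) {x y : X}
    (hx : x ∈ frontier W) (hy : y ∈ frontier W)
    (hNx : IsOutwardNormal W x (N₁ : X)) (hNy : IsOutwardNormal W y (N₂ : X)) :
    ⟪N₁, y - x⟫ ≤ -(1/(2*M)) * ‖N₁ - N₂‖^2 := by
  have hNx' : N₁ = NSW x := (h.2.1 x hx).2 _ hNx
  have hNy' : N₂ = NSW y := (h.2.1 y hy).2 _ hNy
  set r := 1/M with hrdef
  have hr : 0 < r := by positivity
  have hmem : y - r • N₂ + r • N₁ ∈ W := by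
    refine interior_ball h hM y hy _ ?_
    have : y - r • N₂ + r • N₁ - (y - (1/M) • NSW y) = r • N₁ := by
      rw [← hNy', ← hrdef]; abel
    rw [this, norm_smul, Real.norm_eq_abs, abs_of_pos hr, hNx.1, mul_one]
  have hn := hNx.2 _ hmem
  have hexp : ⟪N₁, y - r • N₂ + r • N₁ - x⟫
      = ⟪N₁, y - x⟫ - r * ⟪N₁, N₂⟫ + r * ⟪N₁, N₁⟫ := by
    have : y - r • N₂ + r • N₁ - x = (y - x) - r • N₂ + r • N₁ := by abel
    rw [this, inner_add_right, inner_sub_right, real_inner_smul_right, real_inner_smul_right]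
  rw [hexp, real_inner_self_eq_norm_sq, hNx.1] at hn
  have hsq : ‖N₁ - N₂‖^2 = 2 - 2*⟪N₁, N₂⟫ := by
    have := norm_sub_sq_real N₁ N₂
    rw [hNx.1, hNy.1] at this
    nlinarith [this]
  have h1 : ⟪N₁, y - x⟫ ≤ r * ⟪N₁, N₂⟫ - r := by nlinarith [hn]
  have h2 : ⟪N₁, N₂⟫ = 1 - ‖N₁ - N₂‖^2/2 := by linarith
  rw [h2] at h1
  have heq : r * (1 - ‖N₁ - N₂‖^2/2) - r = -(1/(2*M)) * ‖N₁ - N₂‖^2 := by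
    rw [hrdef]; field_simp; ring
  linarith [heq ▸ h1]

lemma le_of_sq_le_sq' {a b : ℝ} (ha : 0 ≤ a) (hb : 0 ≤ b) (h : a^2 ≤ b^2) : a ≤ b := by
  nlinarith

lemma nearest_unique {K : Set X} (hK : Convex ℝ K) {z p₁ p₂ : X}
    (h₁ : p₁ ∈ K) (h₂ : p₂ ∈ K) (hd₁ : ‖z - p₁‖ = infDist z K) (hd₂ : ‖z - p₂‖ = infDist z K) :
    p₁ = p₂ := by
  have hm : (1/2 : ℝ) • p₁ + (1/2 : ℝ) • p₂ ∈ K := hK h₁ h₂ (by norm_num) (by norm_num) (by norm_num)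
  have hge : infDist z K ≤ ‖z - ((1/2 : ℝ) • p₁ + (1/2 : ℝ) • p₂)‖ := by
    rw [← dist_eq_norm]; exact infDist_le_dist_of_mem hm
  have hpar : ‖(z - p₁) + (z - p₂)‖^2 + ‖(z - p₁) - (z - p₂)‖^2
      = 2 * (‖z - p₁‖^2 + ‖z - p₂‖^2) := by
    have := parallelogram_law_with_norm ℝ (z - p₁) (z - p₂)
    linarith
  have key : z - ((1/2 : ℝ) • p₁ + (1/2 : ℝ) • p₂) = (1/2 : ℝ) • ((z - p₁) + (z - p₂)) := by
    module
  have h1 : ‖z - ((1/2 : ℝ) • p₁ + (1/2 : ℝ) • p₂)‖ = (1/2 : ℝ) * ‖(z - p₁) + (z - p₂)‖ := by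
    rw [key, norm_smul]; norm_num
  have h2 : ‖(z - p₁) - (z - p₂)‖ = ‖p₂ - p₁‖ := by
    congr 1; abel
  have hnn : (0:ℝ) ≤ infDist z K := infDist_nonneg
  have hle : ‖p₂ - p₁‖^2 ≤ 0 := by
    have hsq : (infDist z K)^2 ≤ ((1/2 : ℝ) * ‖(z - p₁) + (z - p₂)‖)^2 := by
      rw [← h1]; exact pow_le_pow_left₀ hnn (h1 ▸ hge) 2
    rw [h2] at hpar
    nlinarith [hpar, hd₁, hd₂]
  have hz0 : p₂ - p₁ = 0 := by
    have := norm_nonneg (p₂ - p₁)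
    have h0 : ‖p₂ - p₁‖ = 0 := by nlinarith
    exact norm_eq_zero.1 h0
  linear_combination (norm := module) -hz0

lemma construct [CompleteSpace X] {C : Set X} {N : X → X} (hC : C.Nonempty)
    (hN : ∀ x ∈ C, ‖N x‖ = 1) {r : ℝ} (hr : 0 < r)
    (hkey : ∀ x ∈ C, ∀ y ∈ C, ⟪N x, y - x⟫ ≤ -(r/2) * ‖N x - N y‖^2) :
    ∃ (V : Set X) (NS : X → X) (L : ℝ), IsC11BodyWith V NS L ∧ C ⊆ frontier V ∧
      ∀ x ∈ C, NS x = N x := by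
  classical
  set K := closure (convexHull ℝ ((fun x => x - r • N x) '' C)) with hKdef
  have hKconv : Convex ℝ K := (convex_convexHull ℝ _).closure
  have hKcl : IsClosed K := isClosed_closure
  obtain ⟨x₀, hx₀⟩ := hC
  have hgen : ∀ x ∈ C, x - r • N x ∈ K := fun x hx =>
    subset_closure (subset_convexHull ℝ _ (mem_image_of_mem _ hx))
  have hKne : K.Nonempty := ⟨x₀ - r • N x₀, hgen x₀ hx₀⟩
  -- separation: K lies below the tangent hyperplane at each x ∈ C, at depth r
  have hsep : ∀ x ∈ C, ∀ k ∈ K, ⟪N x, k⟫ ≤ ⟪N x, x⟫ - r := by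
    intro x hx
    have hsub : K ⊆ {k | ⟪N x, k⟫ ≤ ⟪N x, x⟫ - r} := by
      apply closure_minimal
      · apply convexHull_min
        · rintro _ ⟨y, hy, rfl⟩
          show ⟪N x, y - r • N y⟫ ≤ ⟪N x, x⟫ - r
          have h1 := hkey x hx y hy
          have hsq : ‖N x - N y‖^2 = 2 - 2*⟪N x, N y⟫ := by
            have := norm_sub_sq_real (N x) (N y)
            rw [hN x hx, hN y hy] at this
            nlinarith [this]
          have e1 : ⟪N x, y - x⟫ = ⟪N x, y⟫ - ⟪N x, x⟫ := inner_sub_right _ _ _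
          have e2 : ⟪N x, y - r • N y⟫ = ⟪N x, y⟫ - r * ⟪N x, N y⟫ := by
            rw [inner_sub_right, real_inner_smul_right]
          rw [e2]
          rw [e1, hsq] at h1
          nlinarith [h1]
        · exact convex_halfSpace_le
            ⟨fun a b => inner_add_right _ _ _, fun c a => real_inner_smul_right _ _ _⟩ _
      · exact isClosed_le (Continuous.inner continuous_const continuous_id) continuous_const
    exact fun k hk => hsub hk
  have hdistC : ∀ x ∈ C, infDist x K = r := by
    intro x hx
    refine le_antisymm ?_ (le_infDist' hKne fun k hk => ?_)
    · refine le_trans (infDist_le_dist_of_mem (hgen x hx)) (le_of_eq ?_)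
      rw [dist_eq_norm]
      have : x - (x - r • N x) = r • N x := by abel
      rw [this, norm_smul, Real.norm_eq_abs, abs_of_pos hr, hN x hx, mul_one]
    · have h1 : ⟪N x, x - k⟫ ≤ ‖x - k‖ := by
        have := real_inner_le_norm (N x) (x - k)
        rwa [hN x hx, one_mul] at this
      have h2 : ⟪N x, x - k⟫ = ⟪N x, x⟫ - ⟪N x, k⟫ := inner_sub_right _ _ _
      rw [dist_eq_norm]
      have := hsep x hx k hk
      linarith
  -- the body and its Gauss map
  set V : Set X := {z | infDist z K ≤ r} with hVdef
  have hproj := fun z : X => exists_proj hKconv hKcl hKne z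
  choose P hPmem hPdist hPvar using hproj
  have hVcl : IsClosed V := isClosed_le (continuous_infDist_pt K) continuous_const
  have hVconv : Convex ℝ V := by
    intro z₁ hz₁ z₂ hz₂ a b ha hb hab
    have hm : a • P z₁ + b • P z₂ ∈ K := hKconv (hPmem z₁) (hPmem z₂) ha hb hab
    refine le_trans (infDist_le_dist_of_mem hm) ?_
    rw [dist_eq_norm]
    have e0 : a • z₁ + b • z₂ - (a • P z₁ + b • P z₂) = a • (z₁ - P z₁) + b • (z₂ - P z₂) := by
      rw [smul_sub, smul_sub]; abel
    rw [e0]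
    have hz₁' : infDist z₁ K ≤ r := hz₁
    have hz₂' : infDist z₂ K ≤ r := hz₂
    calc ‖a • (z₁ - P z₁) + b • (z₂ - P z₂)‖
        ≤ a * ‖z₁ - P z₁‖ + b * ‖z₂ - P z₂‖ := by
          refine le_trans (norm_add_le _ _) ?_
          rw [norm_smul, norm_smul, Real.norm_eq_abs, Real.norm_eq_abs,
            abs_of_nonneg ha, abs_of_nonneg hb]
      _ ≤ a * r + b * r := by
          have e1 : ‖z₁ - P z₁‖ ≤ r := (hPdist z₁).le.trans hz₁'
          have e2 : ‖z₂ - P z₂‖ ≤ r := (hPdist z₂).le.trans hz₂'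
          exact add_le_add (mul_le_mul_of_nonneg_left e1 ha) (mul_le_mul_of_nonneg_left e2 hb)
      _ = r := by rw [← add_mul, hab, one_mul]
  have hVint : (interior V).Nonempty := by
    obtain ⟨k₀, hk₀⟩ := hKne
    refine ⟨k₀, mem_interior.2 ⟨ball k₀ r, fun z hz => ?_, isOpen_ball, mem_ball_self hr⟩⟩
    exact le_of_lt (lt_of_le_of_lt (infDist_le_dist_of_mem hk₀) (mem_ball.1 hz))
  -- inner product lower bound: for z at distance r from K and k ∈ K
  have hinner_ge : ∀ z, infDist z K = r → ∀ k ∈ K, r ≤ r⁻¹ * ⟪z - P z, z - k⟫ := by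
    intro z hz k hk
    have hnz : ‖z - P z‖ = r := by rw [hPdist z, hz]
    have e1 : ⟪z - P z, z - k⟫ = ⟪z - P z, z - P z⟫ - ⟪z - P z, k - P z⟫ := by
      rw [← inner_sub_right]; congr 1; abel
    have e2 : r^2 ≤ ⟪z - P z, z - k⟫ := by
      rw [e1, real_inner_self_eq_norm_sq, hnz]
      have := hPvar z k hk
      nlinarith
    calc r = r⁻¹ * r^2 := by field_simp [pow_two]
      _ ≤ r⁻¹ * ⟪z - P z, z - k⟫ := mul_le_mul_of_nonneg_left e2 (inv_pos.2 hr).le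
  have hunit : ∀ z, infDist z K = r → ‖r⁻¹ • (z - P z)‖ = 1 := by
    intro z hz
    have hnz : ‖z - P z‖ = r := by rw [hPdist z, hz]
    rw [norm_smul, Real.norm_eq_abs, abs_of_pos (inv_pos.2 hr), hnz,
      inv_mul_cancel₀ (ne_of_gt hr)]
  have hfront1 : ∀ z ∈ frontier V, infDist z K = r := by
    intro z hz
    rw [hVcl.frontier_eq] at hz
    have h1 : infDist z K ≤ r := hz.1
    rcases lt_or_eq_of_le h1 with hlt | heq
    · exfalso
      apply hz.2
      rw [mem_interior]
      refine ⟨ball z (r - infDist z K), fun z' hz' => ?_, isOpen_ball, mem_ball_self (by linarith)⟩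
      have := infDist_le_infDist_add_dist (x := z') (y := z) (s := K)
      rw [mem_ball, dist_comm] at hz'
      have hd : dist z' z = dist z z' := dist_comm _ _
      show infDist z' K ≤ r
      linarith
    · exact heq
  have hfront2 : ∀ z, infDist z K = r → z ∈ frontier V := by
    intro z hz
    rw [hVcl.frontier_eq]
    refine ⟨le_of_eq hz, fun hint => ?_⟩
    rw [mem_interior_iff_mem_nhds, Metric.mem_nhds_iff] at hint
    obtain ⟨ε, hε, hball⟩ := hint
    have hu := hunit z hz
    set z' := z + (ε/2) • (r⁻¹ • (z - P z)) with hz'def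
    have hz'mem : z' ∈ V := by
      apply hball
      rw [mem_ball, dist_eq_norm, hz'def]
      have e0 : z + (ε/2) • (r⁻¹ • (z - P z)) - z = (ε/2) • (r⁻¹ • (z - P z)) := by abel
      rw [e0, norm_smul, Real.norm_eq_abs, abs_of_pos (by linarith), hu, mul_one]
      linarith
    have hbig : r + ε/2 ≤ infDist z' K := by
      refine le_infDist' hKne fun k hk => ?_
      have h1 := hinner_ge z hz k hk
      have h2 : ⟪r⁻¹ • (z - P z), z' - k⟫
          = r⁻¹ * ⟪z - P z, z - k⟫ + (ε/2) * ⟪r⁻¹ • (z - P z), r⁻¹ • (z - P z)⟫ := by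
        rw [hz'def]
        have e0 : z + (ε/2) • (r⁻¹ • (z - P z)) - k = (z - k) + (ε/2) • (r⁻¹ • (z - P z)) := by
          abel
        rw [e0, inner_add_right, real_inner_smul_right, real_inner_smul_left]
      have h3 : ⟪r⁻¹ • (z - P z), z' - k⟫ ≤ ‖z' - k‖ := by
        have := real_inner_le_norm (r⁻¹ • (z - P z)) (z' - k)
        rwa [hu, one_mul] at this
      rw [h2, real_inner_self_eq_norm_sq, hu] at h3
      rw [dist_eq_norm]
      nlinarith
    have : infDist z' K ≤ r := hz'mem
    linarith
  have hnormal : ∀ z, infDist z K = r → IsOutwardNormal V z (r⁻¹ • (z - P z)) := by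
    intro z hz
    have hnz : ‖z - P z‖ = r := by rw [hPdist z, hz]
    refine ⟨hunit z hz, fun y hy => ?_⟩
    have hyV : infDist y K ≤ r := hy
    have e0 : ⟪z - P z, y - z⟫ = ⟪z - P z, y - P y⟫ + ⟪z - P z, P y - P z⟫
        + ⟪z - P z, P z - z⟫ := by
      rw [← inner_add_right, ← inner_add_right]; congr 1; abel
    have t1 : ⟪z - P z, y - P y⟫ ≤ r * r := by
      have h5 := real_inner_le_norm (z - P z) (y - P y)
      have hyp : ‖y - P y‖ ≤ r := (hPdist y).le.trans hyV
      nlinarith [norm_nonneg (z - P z)]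
    have t2 : ⟪z - P z, P y - P z⟫ ≤ 0 := hPvar z (P y) (hPmem y)
    have t3 : ⟪z - P z, P z - z⟫ = -(r*r) := by
      have e1 : P z - z = -(z - P z) := by abel
      rw [e1, inner_neg_right, real_inner_self_eq_norm_sq, hnz]; ring
    have hfin : ⟪z - P z, y - z⟫ ≤ 0 := by rw [e0, t3]; linarith
    rw [real_inner_smul_left]
    exact mul_nonpos_of_nonneg_of_nonpos (inv_pos.2 hr).le hfin
  have huniq : ∀ z, infDist z K = r → ∀ u', IsOutwardNormal V z u' → u' = r⁻¹ • (z - P z) := by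
    intro z hz u' hu'
    have hnz : ‖z - P z‖ = r := by rw [hPdist z, hz]
    have hu := hunit z hz
    have hy0 : P z + r • u' ∈ V := by
      have : infDist (P z + r • u') K ≤ r := by
        refine le_trans (infDist_le_dist_of_mem (hPmem z)) ?_
        rw [dist_eq_norm]
        have e0 : P z + r • u' - P z = r • u' := by abel
        rw [e0, norm_smul, Real.norm_eq_abs, abs_of_pos hr, hu'.1, mul_one]
      exact this
    have hn := hu'.2 _ hy0
    have e1 : ⟪u', P z + r • u' - z⟫ = -⟪u', z - P z⟫ + r * ⟪u', u'⟫ := by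
      have e0 : P z + r • u' - z = -(z - P z) + r • u' := by abel
      rw [e0, inner_add_right, inner_neg_right, real_inner_smul_right]
    rw [e1, real_inner_self_eq_norm_sq, hu'.1] at hn
    have hge : r ≤ ⟪u', z - P z⟫ := by nlinarith [hn]
    have hinn : 1 ≤ ⟪u', r⁻¹ • (z - P z)⟫ := by
      rw [real_inner_smul_right, ← inv_mul_cancel₀ (ne_of_gt hr)]
      exact mul_le_mul_of_nonneg_left hge (inv_pos.2 hr).le
    have hsq : ‖u' - r⁻¹ • (z - P z)‖^2 ≤ 0 := by
      have := norm_sub_sq_real u' (r⁻¹ • (z - P z))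
      rw [hu'.1, hu] at this
      nlinarith [this]
    have h0 : ‖u' - r⁻¹ • (z - P z)‖ = 0 :=
      le_antisymm (by nlinarith [norm_nonneg (u' - r⁻¹ • (z - P z))]) (norm_nonneg _)
    have hz0 : u' - r⁻¹ • (z - P z) = 0 := norm_eq_zero.1 h0
    linear_combination (norm := module) hz0
  have hLip : ∀ a b : X, ‖r⁻¹ • (a - P a) - r⁻¹ • (b - P b)‖ ≤ (1/r) * ‖a - b‖ := by
    intro a b
    have h1 : ⟪a - P a, P b - P a⟫ ≤ 0 := hPvar a (P b) (hPmem b)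
    have h2 : ⟪b - P b, P a - P b⟫ ≤ 0 := hPvar b (P a) (hPmem a)
    have c1 : ⟪a - P a, P b - P a⟫ = -⟪a - P a, P a - P b⟫ := by
      rw [show P b - P a = -(P a - P b) from by abel, inner_neg_right]
    have h1' : 0 ≤ ⟪a - P a, P a - P b⟫ := by
      rw [c1] at h1; linarith
    have e : ⟪a - b, P a - P b⟫
        = ⟪a - P a, P a - P b⟫ - ⟪b - P b, P a - P b⟫ + ⟪P a - P b, P a - P b⟫ := by
      rw [show a - b = ((a - P a) - (b - P b)) + (P a - P b) from by abel,
        inner_add_left, inner_sub_left]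
    have hmono : ‖P a - P b‖^2 ≤ ⟪a - b, P a - P b⟫ := by
      rw [e, real_inner_self_eq_norm_sq]
      linarith
    have hsq : ‖(a - P a) - (b - P b)‖^2 ≤ ‖a - b‖^2 := by
      have e3 : (a - P a) - (b - P b) = (a - b) - (P a - P b) := by abel
      rw [e3, norm_sub_sq_real]
      nlinarith [hmono, sq_nonneg ‖P a - P b‖]
    have h4 : ‖(a - P a) - (b - P b)‖ ≤ ‖a - b‖ :=
      le_of_sq_le_sq' (norm_nonneg _) (norm_nonneg _) hsq
    rw [← smul_sub, norm_smul, Real.norm_eq_abs, abs_of_pos (inv_pos.2 hr), one_div]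
    exact mul_le_mul_of_nonneg_left h4 (inv_pos.2 hr).le
  have hNSC : ∀ x ∈ C, r⁻¹ • (x - P x) = N x := by
    intro x hx
    have hPx : P x = x - r • N x := by
      refine nearest_unique hKconv (hPmem x) (hgen x hx) (hPdist x) ?_
      have e0 : x - (x - r • N x) = r • N x := by abel
      rw [e0, norm_smul, Real.norm_eq_abs, abs_of_pos hr, hN x hx, mul_one, hdistC x hx]
    rw [hPx]
    have e0 : x - (x - r • N x) = r • N x := by abel
    rw [e0, smul_smul, inv_mul_cancel₀ (ne_of_gt hr), one_smul]
  exact ⟨V, fun z => r⁻¹ • (z - P z), 1/r, ⟨⟨hVcl, hVconv, hVint⟩, fun z hz =>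
    ⟨hnormal z (hfront1 z hz), huniq z (hfront1 z hz)⟩, fun a _ b _ => hLip a b⟩,
    fun x hx => hfront2 x (hdistC x hx), hNSC⟩

lemma unitBall_C11 : IsC11BodyWith (closedBall (0:X) 1) (fun z => z) 1 := by
  constructor
  · exact ⟨Metric.isClosed_closedBall, convex_closedBall 0 1,
      ⟨0, ball_subset_interior_closedBall (mem_ball_self one_pos)⟩⟩
  constructor
  · intro z hz
    have hz1 : ‖z‖ = 1 := by
      rw [IsClosed.frontier_eq Metric.isClosed_closedBall] at hz
      have h1 : ‖z‖ ≤ 1 := by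
        have := hz.1; rwa [mem_closedBall, dist_zero_right] at this
      rcases lt_or_eq_of_le h1 with hlt | heq
      · exact absurd (ball_subset_interior_closedBall
          (by rwa [mem_ball, dist_zero_right])) hz.2
      · exact heq
    have hnormal : IsOutwardNormal (closedBall (0:X) 1) z z := by
      refine ⟨hz1, fun y hy => ?_⟩
      have hy1 : ‖y‖ ≤ 1 := by rwa [mem_closedBall, dist_zero_right] at hy
      have := real_inner_le_norm z y
      rw [inner_sub_right, real_inner_self_eq_norm_sq, hz1]
      nlinarith
    refine ⟨hnormal, fun u hu => ?_⟩
    have huB : u ∈ closedBall (0:X) 1 := by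
      rw [mem_closedBall, dist_zero_right, hu.1]
    have hn := hu.2 u huB
    rw [inner_sub_right, real_inner_self_eq_norm_sq, hu.1] at hn
    have hsq : ‖u - z‖^2 ≤ 0 := by
      have := norm_sub_sq_real u z
      rw [hu.1, hz1] at this
      nlinarith
    have h0 : ‖u - z‖ = 0 :=
      le_antisymm (by nlinarith [norm_nonneg (u - z)]) (norm_nonneg _)
    have : u - z = 0 := norm_eq_zero.1 h0
    linear_combination (norm := module) this
  · intro a _ b _
    rw [one_mul]

/-- Finiteness principle for prescribing tangent hyperplanes to `C^{1,1}` convex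
hypersurfaces in a Hilbert space. -/
theorem finiteness_principle_C11_Hilbert [CompleteSpace X]
    (C : Set X) (N : X → X) (hN : ∀ x ∈ C, ‖N x‖ = 1) :
    (∃ (V : Set X) (NS : X → X) (L : ℝ), IsC11BodyWith V NS L ∧ C ⊆ frontier V ∧
        ∀ x ∈ C, NS x = N x) ↔
    (∃ M > (0:ℝ), ∀ x₁ ∈ C, ∀ x₂ ∈ C,
        ∃ (V : Set X) (NS : X → X), IsC11BodyWith V NS M ∧
          x₁ ∈ frontier V ∧ x₂ ∈ frontier V ∧
          IsOutwardNormal V x₁ (N x₁) ∧ IsOutwardNormal V x₂ (N x₂)) := by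
  constructor
  · rintro ⟨V, NS, L, h, hCf, hNS⟩
    refine ⟨max L 1, lt_of_lt_of_le one_pos (le_max_right _ _), fun x₁ hx₁ x₂ hx₂ => ?_⟩
    refine ⟨V, NS, ⟨h.1, h.2.1, fun a ha b hb => (h.2.2 a ha b hb).trans
      (mul_le_mul_of_nonneg_right (le_max_left _ _) (norm_nonneg _))⟩,
      hCf hx₁, hCf hx₂, ?_, ?_⟩
    · exact hNS x₁ hx₁ ▸ (h.2.1 x₁ (hCf hx₁)).1
    · exact hNS x₂ hx₂ ▸ (h.2.1 x₂ (hCf hx₂)).1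
  · rintro ⟨M, hM, hpair⟩
    rcases C.eq_empty_or_nonempty with rfl | hCne
    · exact ⟨closedBall 0 1, fun z => z, 1, unitBall_C11, empty_subset _,
        fun x hx => absurd hx (notMem_empty x)⟩
    · have hr : (0:ℝ) < 1/M := by positivity
      refine construct hCne hN hr fun x hx y hy => ?_
      obtain ⟨W, NSW, hW, hx1, hy1, hn1, hn2⟩ := hpair x hx y hy
      have hkey := key_ineq hW hM hx1 hy1 hn1 hn2
      have heq : -(1/(2*M)) = -((1/M)/2) := by ring
      rwa [heq] at hkey
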